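/- Let A ∈ (ℝ ∪ {−∞})^{n×n} have spectral radius λ > −∞, let g ∈ (ℝ ∪ {−∞})ⁿ, and let h ∈ ℝⁿ be a regular vector such that h⁻ g ≤ 𝟙. Set θ = λ ⊕ ⊕_{k=1}^{n} (h⁻ A^k g)^{1/k}. Then the minimum of x⁻ A x over all regular vectors x ∈ ℝⁿ with g ≤ x ≤ h equals θ, and a regular vector x with g ≤ x ≤ h attains this minimum if and only if x = (θ⁻¹ A)* u for some vector u with g ≤ u ≤ (h⁻ (θ⁻¹ A)*)⁻, where θ⁻¹ = −θ. -/

import Mathlib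

open Finset

noncomputable section

namespace MaxPlus

/-- Max-plus multiplicative inverse: `-a` for real `a`, `⊥` for `⊥`. -/
def tinv (a : WithBot ℝ) : WithBot ℝ := WithBot.map (fun r => -r) a

/-- Max-plus rational power `a^(1/k) = a / k`. -/
def trt (a : WithBot ℝ) (k : ℕ) : WithBot ℝ := WithBot.map (fun r => r / (k : ℝ)) a

/-- A vector is regular if it has no `⊥` (= -∞) entries. -/
def Reg {n : ℕ} (x : Fin n → WithBot ℝ) : Prop := ∀ i, x i ≠ ⊥

/-- `cdot q x = q⁻ x`, the max-plus product of the conjugate row vector `q⁻` with `x`. -/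
def cdot {n : ℕ} (q x : Fin n → WithBot ℝ) : WithBot ℝ :=
  Finset.univ.sup fun i => tinv (q i) + x i

/-- Max-plus matrix-vector product. -/
def mulVec {m n : ℕ} (A : Matrix (Fin m) (Fin n) (WithBot ℝ)) (x : Fin n → WithBot ℝ) :
    Fin m → WithBot ℝ := fun i => Finset.univ.sup fun j => A i j + x j

/-- Max-plus matrix product. -/
def tmul {l m n : ℕ} (A : Matrix (Fin l) (Fin m) (WithBot ℝ))
    (B : Matrix (Fin m) (Fin n) (WithBot ℝ)) : Matrix (Fin l) (Fin n) (WithBot ℝ) :=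
  fun i j => Finset.univ.sup fun k => A i k + B k j

/-- Multiplicative conjugate transpose of a matrix. -/
def conjM {m n : ℕ} (A : Matrix (Fin m) (Fin n) (WithBot ℝ)) :
    Matrix (Fin n) (Fin m) (WithBot ℝ) := fun i j => tinv (A j i)

/-- Max-plus identity matrix. -/
def tId {n : ℕ} : Matrix (Fin n) (Fin n) (WithBot ℝ) := fun i j => if i = j then 0 else ⊥

/-- Max-plus matrix power. -/
def tpow {n : ℕ} (A : Matrix (Fin n) (Fin n) (WithBot ℝ)) : ℕ → Matrix (Fin n) (Fin n) (WithBot ℝ)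
  | 0 => tId
  | k + 1 => tmul A (tpow A k)

/-- Max-plus trace. -/
def ttr {n : ℕ} (A : Matrix (Fin n) (Fin n) (WithBot ℝ)) : WithBot ℝ :=
  Finset.univ.sup fun i => A i i

/-- `Tr(A) = tr A ⊕ tr A² ⊕ ⋯ ⊕ tr Aⁿ`. -/
def TrOp {n : ℕ} (A : Matrix (Fin n) (Fin n) (WithBot ℝ)) : WithBot ℝ :=
  (Finset.Icc 1 n).sup fun m => ttr (tpow A m)

/-- Kleene star `A* = I ⊕ A ⊕ ⋯ ⊕ A^(n-1)`. -/
def kstar {n : ℕ} (A : Matrix (Fin n) (Fin n) (WithBot ℝ)) : Matrix (Fin n) (Fin n) (WithBot ℝ) :=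
  fun i j => (Finset.range n).sup fun k => tpow A k i j

/-- Max-plus spectral radius `λ = ⊕_{m=1}^n (tr A^m)^(1/m)`. -/
def specRad {n : ℕ} (A : Matrix (Fin n) (Fin n) (WithBot ℝ)) : WithBot ℝ :=
  (Finset.Icc 1 n).sup fun m => trt (ttr (tpow A m)) m

/-- `prodAB A B [i₁, …, i_k] = A B^{i₁} A B^{i₂} ⋯ A B^{i_k}`. -/
def prodAB {n : ℕ} (A B : Matrix (Fin n) (Fin n) (WithBot ℝ)) :
    List ℕ → Matrix (Fin n) (Fin n) (WithBot ℝ)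
  | [] => tId
  | i :: t => tmul (tmul A (tpow B i)) (prodAB A B t)

/-- The all-ones (all-`𝟙 = 0`) vector. -/
def onesV (n : ℕ) : Fin n → WithBot ℝ := fun _ => 0

end MaxPlus

open MaxPlus

/-!
Normalising by a real `c`, the inequality `x⁻ A x ≤ c` for regular `x` says `B x ≤ x` with
`B = c⁻¹ A`. Such a subeigenvector forces `tr Bᵏ ≤ 𝟙` and, through `Bᵏ g ≤ Bᵏ x ≤ x ≤ h`,
`h⁻ Bᵏ g ≤ 𝟙`; these are exactly the conditions for `θ ≤ c`, so `θ` is a lower bound.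
For `c = θ` the same conditions give `Tr B ≤ 𝟙`, hence `B B* ≤ B*` (a walk of length `n` repeats
a vertex, and the cycle it closes has nonpositive weight), and `B* g ≤ h`. Then the feasible
solutions of `B x ≤ x` are the vectors `x = B* u` with `g ≤ u` and `B* u ≤ h`, i.e.
`u ≤ (h⁻ B*)⁻`, and `u = (h⁻ B*)⁻` is a regular choice, which gives a minimiser.
-/

lemma List.exists_eq_append_cons_append_cons_of_not_nodup {α : Type*} {l : List α}
    (hl : ¬ l.Nodup) : ∃ y L₁ L₂ L₃, l = L₁ ++ y :: L₂ ++ y :: L₃ := by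
  obtain ⟨y, hy⟩ : ∃ y, List.Sublist [y, y] l := by simpa [List.nodup_iff_sublist] using hl
  obtain ⟨r₁, r₂, rfl, h₁, h₂⟩ := List.cons_sublist_iff.1 hy
  obtain ⟨L₁, L₂, rfl⟩ := List.append_of_mem h₁
  obtain ⟨L₂', L₃, rfl⟩ := List.append_of_mem (List.singleton_sublist.1 h₂)
  exact ⟨y, L₁, L₂ ++ L₂', L₃, by simp⟩

namespace MaxPlus

variable {n : ℕ}

@[simp] lemma tinv_coe (r : ℝ) : tinv (r : WithBot ℝ) = ((-r : ℝ) : WithBot ℝ) := rfl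

lemma coe_add_le_iff (r : ℝ) (w v : WithBot ℝ) :
    (r : WithBot ℝ) + w ≤ v ↔ w ≤ ((-r : ℝ) : WithBot ℝ) + v := by
  rw [← WithBot.add_le_add_iff_left (WithBot.coe_ne_bot (a := -r)), ← add_assoc,
    ← WithBot.coe_add, neg_add_cancel, WithBot.coe_zero, zero_add]

lemma le_tinv_iff {s : WithBot ℝ} (hs : s ≠ ⊥) (u : WithBot ℝ) : u ≤ tinv s ↔ s + u ≤ 0 := by
  lift s to ℝ using hs
  rw [coe_add_le_iff, add_zero, tinv_coe]

lemma add_finset_sup {ι : Type*} (s : Finset ι) (f : ι → WithBot ℝ) (a : WithBot ℝ) :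
    a + s.sup f = s.sup fun i => a + f i :=
  Finset.apply_sup_eq_sup_comp_of_linearOrder (a + ·) (fun _ _ h => add_le_add_right h a)
    (WithBot.add_bot a)

lemma finset_sup_add {ι : Type*} (s : Finset ι) (f : ι → WithBot ℝ) (a : WithBot ℝ) :
    s.sup f + a = s.sup fun i => f i + a := by
  simpa only [add_comm a] using add_finset_sup s f a

lemma trt_le_coe_iff {k : ℕ} (hk : k ≠ 0) (a : WithBot ℝ) (c : ℝ) :
    trt a k ≤ c ↔ k • ((-c : ℝ) : WithBot ℝ) + a ≤ 0 := by
  induction a using WithBot.recBotCoe with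
  | bot => simp [trt]
  | coe r =>
    have hk : (0 : ℝ) < k := by positivity
    rw [trt, WithBot.map_coe, ← WithBot.coe_nsmul, ← WithBot.coe_add, ← WithBot.coe_zero,
      WithBot.coe_le_coe, WithBot.coe_le_coe, div_le_iff₀ hk, nsmul_eq_mul]
    constructor <;> intro h <;> linarith

section Products

variable {m : ℕ}

lemma le_mulVec (M : Matrix (Fin m) (Fin n) (WithBot ℝ)) (x : Fin n → WithBot ℝ) (i : Fin m)
    (j : Fin n) : M i j + x j ≤ mulVec M x i :=
  Finset.le_sup (f := fun j => M i j + x j) (Finset.mem_univ j)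

lemma mulVec_le_iff {M : Matrix (Fin m) (Fin n) (WithBot ℝ)} {x : Fin n → WithBot ℝ} {i : Fin m}
    {c : WithBot ℝ} : mulVec M x i ≤ c ↔ ∀ j, M i j + x j ≤ c := by
  simp [mulVec, Finset.sup_le_iff]

lemma mulVec_mono (M : Matrix (Fin m) (Fin n) (WithBot ℝ)) : Monotone (mulVec M) :=
  fun _ _ hxy i => mulVec_le_iff.2 fun j =>
    (add_le_add_right (hxy j) _).trans (le_mulVec M _ i j)

lemma mulVec_mono_left {M N : Matrix (Fin m) (Fin n) (WithBot ℝ)} (hMN : ∀ i j, M i j ≤ N i j)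
    (x : Fin n → WithBot ℝ) : mulVec M x ≤ mulVec N x :=
  fun i => mulVec_le_iff.2 fun j => (add_le_add_left (hMN i j) _).trans (le_mulVec N x i j)

lemma mulVec_tmul {l : ℕ} (P : Matrix (Fin l) (Fin m) (WithBot ℝ))
    (Q : Matrix (Fin m) (Fin n) (WithBot ℝ)) (x : Fin n → WithBot ℝ) :
    mulVec (tmul P Q) x = mulVec P (mulVec Q x) := by
  funext i
  simp only [mulVec, tmul, finset_sup_add, add_finset_sup, add_assoc]
  exact Finset.sup_comm _ _ _

lemma mulVec_tId (x : Fin n → WithBot ℝ) : mulVec tId x = x := by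
  funext i
  refine le_antisymm (mulVec_le_iff.2 fun j => ?_) (by simpa [tId] using le_mulVec tId x i i)
  by_cases hij : i = j
  · simp [tId, hij]
  · simp [tId, hij]

lemma mulVec_tpow_succ (M : Matrix (Fin n) (Fin n) (WithBot ℝ)) (k : ℕ) (x : Fin n → WithBot ℝ) :
    mulVec (tpow M (k + 1)) x = mulVec M (mulVec (tpow M k) x) :=
  mulVec_tmul M (tpow M k) x

lemma tpow_one (M : Matrix (Fin n) (Fin n) (WithBot ℝ)) : tpow M 1 = M := by
  funext i j
  show Finset.univ.sup (fun k => M i k + tId k j) = M i j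
  refine le_antisymm (Finset.sup_le fun k _ => ?_) ?_
  · by_cases hkj : k = j
    · simp [tId, hkj]
    · simp [tId, hkj]
  · simpa [tId] using Finset.le_sup (f := fun k => M i k + tId k j) (Finset.mem_univ j)

lemma le_cdot (q x : Fin n → WithBot ℝ) (i : Fin n) : tinv (q i) + x i ≤ cdot q x :=
  Finset.le_sup (f := fun i => tinv (q i) + x i) (Finset.mem_univ i)

lemma cdot_le_iff {q x : Fin n → WithBot ℝ} {c : WithBot ℝ} :
    cdot q x ≤ c ↔ ∀ i, tinv (q i) + x i ≤ c := by
  simp [cdot, Finset.sup_le_iff]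

lemma cdot_le_iff_le_add {q : Fin n → WithBot ℝ} (hq : Reg q) {x : Fin n → WithBot ℝ}
    {c : WithBot ℝ} : cdot q x ≤ c ↔ ∀ i, x i ≤ q i + c := by
  refine cdot_le_iff.trans (forall_congr' fun i => ?_)
  lift q i to ℝ using hq i with r
  rw [tinv_coe, coe_add_le_iff, neg_neg]

lemma cdot_le_zero_iff {q : Fin n → WithBot ℝ} (hq : Reg q) {x : Fin n → WithBot ℝ} :
    cdot q x ≤ 0 ↔ x ≤ q := by
  simp only [cdot_le_iff_le_add hq, add_zero, Pi.le_def]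

end Products

def tsmul {l m : ℕ} (c : WithBot ℝ) (M : Matrix (Fin l) (Fin m) (WithBot ℝ)) :
    Matrix (Fin l) (Fin m) (WithBot ℝ) :=
  fun i j => c + M i j

lemma mulVec_tsmul {m : ℕ} (c : WithBot ℝ) (M : Matrix (Fin m) (Fin n) (WithBot ℝ))
    (x : Fin n → WithBot ℝ) (i : Fin m) : mulVec (tsmul c M) x i = c + mulVec M x i := by
  simp only [mulVec, tsmul, add_finset_sup, add_assoc]

lemma tmul_tsmul_tsmul {l m : ℕ} (a b : WithBot ℝ) (P : Matrix (Fin l) (Fin m) (WithBot ℝ))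
    (Q : Matrix (Fin m) (Fin n) (WithBot ℝ)) :
    tmul (tsmul a P) (tsmul b Q) = tsmul (a + b) (tmul P Q) := by
  funext i j
  simp only [tmul, tsmul, add_finset_sup, add_add_add_comm]

lemma tpow_tsmul (c : WithBot ℝ) (M : Matrix (Fin n) (Fin n) (WithBot ℝ)) (k : ℕ) :
    tpow (tsmul c M) k = tsmul (k • c) (tpow M k) := by
  induction k with
  | zero => funext i j; simp [tpow, tsmul]
  | succ k ih => rw [tpow, ih, tmul_tsmul_tsmul, succ_nsmul']; rfl

lemma ttr_tsmul (c : WithBot ℝ) (M : Matrix (Fin n) (Fin n) (WithBot ℝ)) :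
    ttr (tsmul c M) = c + ttr M := by
  simp only [ttr, tsmul, add_finset_sup]

lemma cdot_mulVec_tsmul (c : WithBot ℝ) (q : Fin n → WithBot ℝ)
    (M : Matrix (Fin n) (Fin n) (WithBot ℝ)) (x : Fin n → WithBot ℝ) :
    cdot q (mulVec (tsmul c M) x) = c + cdot q (mulVec M x) := by
  simp only [cdot, mulVec_tsmul, add_finset_sup, add_left_comm c]

section Walks

variable (M : Matrix (Fin n) (Fin n) (WithBot ℝ))

def walkWeight : List (Fin n) → WithBot ℝ
  | a :: b :: t => M a b + walkWeight (b :: t)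
  | _ => 0

lemma walkWeight_append_cons (x : Fin n) : ∀ l₁ l₂ : List (Fin n),
    walkWeight M (l₁ ++ x :: l₂) = walkWeight M (l₁ ++ [x]) + walkWeight M (x :: l₂)
  | [], _ => by simp [walkWeight]
  | [_], _ => by simp [walkWeight]
  | a :: b :: t, l₂ => by
    have ih := walkWeight_append_cons x (b :: t) l₂
    simp only [List.cons_append] at ih ⊢
    simp only [walkWeight, ih, add_assoc]

lemma le_tpow_succ (m : ℕ) (i k j : Fin n) : M i k + tpow M m k j ≤ tpow M (m + 1) i j :=
  Finset.le_sup (f := fun k => M i k + tpow M m k j) (Finset.mem_univ k)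

lemma walkWeight_le_tpow : ∀ (v : List (Fin n)) {i j : Fin n}, v.head? = some i →
    v.getLast? = some j → walkWeight M v ≤ tpow M (v.length - 1) i j
  | [], _, _, hi, _ => by simp at hi
  | [a], i, j, hi, hj => by
    simp only [List.head?_cons, List.getLast?_singleton, Option.some.injEq] at hi hj
    subst hi hj
    simp [walkWeight, tpow, tId]
  | a :: b :: t, i, j, hi, hj => by
    simp only [List.head?_cons, Option.some.injEq] at hi
    subst hi
    calc walkWeight M (a :: b :: t) = M a b + walkWeight M (b :: t) := rfl
      _ ≤ M a b + tpow M t.length b j :=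
        add_le_add_right (walkWeight_le_tpow (b :: t) rfl (by simpa using hj)) _
      _ ≤ _ := le_tpow_succ M _ a b j

lemma exists_walk_tpow_le (m : ℕ) (i j : Fin n) : ∃ t : List (Fin n), t.length = m + 1 ∧
    (i :: t).getLast? = some j ∧ tpow M (m + 1) i j ≤ walkWeight M (i :: t) := by
  induction m generalizing i with
  | zero => exact ⟨[j], rfl, rfl, by simp [walkWeight, tpow_one]⟩
  | succ m ih =>
    obtain ⟨k, -, hk⟩ := Finset.exists_mem_eq_sup Finset.univ ⟨i, Finset.mem_univ i⟩
      fun k => M i k + tpow M (m + 1) k j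
    obtain ⟨t, hlen, hlast, hwt⟩ := ih k
    refine ⟨k :: t, by simp [hlen], by simpa using hlast, ?_⟩
    calc tpow M (m + 2) i j = M i k + tpow M (m + 1) k j := hk
      _ ≤ M i k + walkWeight M (k :: t) := add_le_add_right hwt _
      _ = walkWeight M (i :: k :: t) := rfl

end Walks

section KleeneStar

variable {M : Matrix (Fin n) (Fin n) (WithBot ℝ)}

lemma walkWeight_cycle_nonpos (hM : TrOp M ≤ 0) (y : Fin n) {L : List (Fin n)}
    (hL : L.length < n) : walkWeight M (y :: L ++ [y]) ≤ 0 :=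
  calc walkWeight M (y :: L ++ [y]) ≤ tpow M (L.length + 1) y y := by
        simpa using walkWeight_le_tpow M (y :: L ++ [y]) (i := y) (j := y) (by simp)
          List.getLast?_concat
    _ ≤ ttr (tpow M (L.length + 1)) :=
        Finset.le_sup (f := fun i => tpow M (L.length + 1) i i) (Finset.mem_univ y)
    _ ≤ TrOp M := Finset.le_sup (f := fun m => ttr (tpow M m)) (by simp; omega)
    _ ≤ 0 := hM

lemma tpow_le_kstar {k : ℕ} (hk : k < n) (i j : Fin n) : tpow M k i j ≤ kstar M i j :=
  Finset.le_sup (f := fun k => tpow M k i j) (Finset.mem_range.2 hk)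

lemma zero_le_kstar_self (i : Fin n) : 0 ≤ kstar M i i := by
  simpa [tpow, tId] using tpow_le_kstar (M := M) i.pos i i

/-- A walk of length `n` repeats a vertex; cutting out the cycle in between, which has
nonpositive weight, leaves a shorter walk that is at least as heavy. -/
lemma tpow_card_le_kstar (hM : TrOp M ≤ 0) (i j : Fin n) : tpow M n i j ≤ kstar M i j := by
  obtain ⟨m, rfl⟩ : ∃ m, n = m + 1 := Nat.exists_eq_add_one.2 i.pos
  obtain ⟨t, hlen, hlast, hwt⟩ := exists_walk_tpow_le M m i j
  have hdup : ¬ (i :: t).Nodup := fun hnd => by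
    simpa [hlen] using hnd.length_le_card
  obtain ⟨y, L₁, L₂, L₃, hsplit⟩ := List.exists_eq_append_cons_append_cons_of_not_nodup hdup
  have hlens := congrArg List.length hsplit
  simp only [List.length_cons, List.length_append, hlen] at hlens
  have hcycle := walkWeight_cycle_nonpos hM y (L := L₂) (by omega)
  calc tpow M (m + 1) i j ≤ walkWeight M (i :: t) := hwt
    _ = walkWeight M (L₁ ++ [y]) + walkWeight M (y :: L₂ ++ [y]) + walkWeight M (y :: L₃) := by
      rw [hsplit, walkWeight_append_cons M y (L₁ ++ y :: L₂) L₃, List.append_assoc L₁,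
        List.cons_append, walkWeight_append_cons M y L₁ (L₂ ++ [y])]
    _ ≤ walkWeight M (L₁ ++ [y]) + walkWeight M (y :: L₃) := by
      grw [hcycle, add_zero]
    _ = walkWeight M (L₁ ++ y :: L₃) := (walkWeight_append_cons M y L₁ L₃).symm
    _ ≤ tpow M ((L₁ ++ y :: L₃).length - 1) i j :=
      walkWeight_le_tpow M _ (by simpa using (congrArg List.head? hsplit).symm)
        (by simpa only [hsplit, List.getLast?_append, List.getLast?_cons, Option.some_or]
          using hlast)
    _ ≤ kstar M i j := tpow_le_kstar (by simp; omega) i j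

lemma tmul_kstar_le_kstar (hM : TrOp M ≤ 0) (i j : Fin n) :
    tmul M (kstar M) i j ≤ kstar M i j := by
  refine Finset.sup_le fun k _ => ?_
  rw [show M i k + kstar M k j = (Finset.range n).sup fun r => M i k + tpow M r k j from
    add_finset_sup _ _ _]
  refine Finset.sup_le fun r hr => (le_tpow_succ M r i k j).trans ?_
  rcases Nat.lt_or_eq_of_le (Finset.mem_range.1 hr) with hlt | heq
  · exact tpow_le_kstar hlt i j
  · exact heq ▸ tpow_card_le_kstar hM i j

lemma mulVec_kstar (x : Fin n → WithBot ℝ) (i : Fin n) :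
    mulVec (kstar M) x i = (Finset.range n).sup fun k => mulVec (tpow M k) x i := by
  simp only [mulVec, kstar, finset_sup_add]
  exact Finset.sup_comm _ _ _

lemma kstar_mulVec_le_iff {x y : Fin n → WithBot ℝ} :
    mulVec (kstar M) x ≤ y ↔ ∀ k < n, mulVec (tpow M k) x ≤ y := by
  simp only [Pi.le_def, mulVec_kstar, Finset.sup_le_iff, Finset.mem_range]
  exact ⟨fun H k hk i => H i k hk, fun H i k hk => H k hk i⟩

lemma le_kstar_mulVec (u : Fin n → WithBot ℝ) : u ≤ mulVec (kstar M) u := fun j =>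
  calc u j = 0 + u j := (zero_add _).symm
    _ ≤ kstar M j j + u j := add_le_add_left (zero_le_kstar_self j) _
    _ ≤ mulVec (kstar M) u j := le_mulVec _ u j j

lemma mulVec_kstar_mulVec_le (hM : TrOp M ≤ 0) (u : Fin n → WithBot ℝ) :
    mulVec M (mulVec (kstar M) u) ≤ mulVec (kstar M) u := by
  rw [← mulVec_tmul]
  exact mulVec_mono_left (tmul_kstar_le_kstar hM) u

lemma tpow_mulVec_le {x : Fin n → WithBot ℝ} (hx : mulVec M x ≤ x) (k : ℕ) :
    mulVec (tpow M k) x ≤ x := by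
  induction k with
  | zero => exact (mulVec_tId x).le
  | succ k ih => exact (mulVec_tpow_succ M k x).trans_le ((mulVec_mono M ih).trans hx)

lemma kstar_mulVec_eq_self {x : Fin n → WithBot ℝ} (hx : mulVec M x ≤ x) :
    mulVec (kstar M) x = x :=
  le_antisymm (kstar_mulVec_le_iff.2 fun k _ => tpow_mulVec_le hx k) (le_kstar_mulVec x)

lemma ttr_nonpos_of_mulVec_le {x : Fin n → WithBot ℝ} (hx : Reg x) (hMx : mulVec M x ≤ x) :
    ttr M ≤ 0 := by
  refine Finset.sup_le fun i _ => ?_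
  rw [← WithBot.add_le_add_iff_right (hx i), zero_add]
  exact (le_mulVec M x i i).trans (hMx i)

end KleeneStar

/-- `residual K h = (h⁻ K)⁻`. -/
def residual (K : Matrix (Fin n) (Fin n) (WithBot ℝ)) (h : Fin n → WithBot ℝ) :
    Fin n → WithBot ℝ :=
  fun j => tinv (cdot h fun r => K r j)

section Residual

variable {K : Matrix (Fin n) (Fin n) (WithBot ℝ)} {h : Fin n → WithBot ℝ}

lemma cdot_col_ne_bot (hh : Reg h) (hK : ∀ j, 0 ≤ K j j) (j : Fin n) :
    (cdot h fun r => K r j) ≠ ⊥ := by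
  lift h j to ℝ using hh j with r hr
  refine ne_bot_of_le_ne_bot (b := ((-r : ℝ) : WithBot ℝ)) WithBot.coe_ne_bot
    (le_trans ?_ (le_cdot h _ j))
  rw [← hr, tinv_coe]
  exact le_add_of_nonneg_right (hK j)

lemma reg_residual (hh : Reg h) (hK : ∀ j, 0 ≤ K j j) : Reg (residual K h) := fun j => by
  lift (cdot h fun r => K r j) to ℝ using cdot_col_ne_bot hh hK j with s hs
  simp [residual, ← hs]

lemma le_residual_iff (hh : Reg h) (hK : ∀ j, 0 ≤ K j j) {u : Fin n → WithBot ℝ} :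
    u ≤ residual K h ↔ mulVec K u ≤ h := by
  have hcol (j : Fin n) : (cdot h fun r => K r j) + u j = cdot h fun r => K r j + u j := by
    simp only [cdot, finset_sup_add, add_assoc]
  simp only [Pi.le_def, residual, le_tinv_iff (cdot_col_ne_bot hh hK _), hcol,
    cdot_le_iff_le_add hh, add_zero, mulVec_le_iff]
  exact forall_comm

end Residual

section Subeigenvectors

variable {M : Matrix (Fin n) (Fin n) (WithBot ℝ)} {g h : Fin n → WithBot ℝ}

lemma mulVec_le_self_iff_eq_kstar_mulVec (hM : TrOp M ≤ 0) (hh : Reg h)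
    {x : Fin n → WithBot ℝ} (hgx : g ≤ x) (hxh : x ≤ h) :
    mulVec M x ≤ x ↔ ∃ u, x = mulVec (kstar M) u ∧ g ≤ u ∧ u ≤ residual (kstar M) h := by
  refine ⟨fun hMx => ⟨x, (kstar_mulVec_eq_self hMx).symm, hgx, ?_⟩, ?_⟩
  · rwa [le_residual_iff hh zero_le_kstar_self, kstar_mulVec_eq_self hMx]
  · rintro ⟨u, rfl, -⟩
    exact mulVec_kstar_mulVec_le hM u

lemma exists_reg_mulVec_le_self (hM : TrOp M ≤ 0) (hh : Reg h)
    (hg : mulVec (kstar M) g ≤ h) : ∃ x, Reg x ∧ g ≤ x ∧ x ≤ h ∧ mulVec M x ≤ x := by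
  have hK : ∀ j, 0 ≤ kstar M j j := zero_le_kstar_self
  set u := residual (kstar M) h
  have hgu : g ≤ u := (le_residual_iff hh hK).2 hg
  have hux : u ≤ mulVec (kstar M) u := le_kstar_mulVec u
  refine ⟨mulVec (kstar M) u, fun j hj => reg_residual hh hK j ?_, hgu.trans hux,
    (le_residual_iff hh hK).1 le_rfl, mulVec_kstar_mulVec_le hM u⟩
  exact le_bot_iff.1 (hj ▸ hux j)

end Subeigenvectors

section Normalization

variable (A : Matrix (Fin n) (Fin n) (WithBot ℝ))

lemma cdot_mulVec_le_coe_iff {x : Fin n → WithBot ℝ} (hx : Reg x) (c : ℝ) :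
    cdot x (mulVec A x) ≤ c ↔ mulVec (tsmul (tinv c) A) x ≤ x := by
  simp only [cdot_le_iff_le_add hx, Pi.le_def, mulVec_tsmul, tinv_coe, coe_add_le_iff, neg_neg,
    add_comm (x _)]

lemma specRad_le_coe_iff (c : ℝ) : specRad A ≤ c ↔ TrOp (tsmul (tinv c) A) ≤ 0 := by
  simp only [specRad, TrOp, Finset.sup_le_iff, Finset.mem_Icc]
  refine forall₂_congr fun k hk => ?_
  rw [trt_le_coe_iff (by omega), tpow_tsmul, ttr_tsmul, tinv_coe]

lemma sup_trt_cdot_le_coe_iff (g h : Fin n → WithBot ℝ) (c : ℝ) :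
    (Finset.Icc 1 n).sup (fun k => trt (cdot h (mulVec (tpow A k) g)) k) ≤ c ↔
      ∀ k ∈ Finset.Icc 1 n, cdot h (mulVec (tpow (tsmul (tinv c) A) k) g) ≤ 0 := by
  simp only [Finset.sup_le_iff]
  refine forall₂_congr fun k hk => ?_
  rw [trt_le_coe_iff (by simp at hk; omega), tpow_tsmul, cdot_mulVec_tsmul, tinv_coe]

variable {A} {g h : Fin n → WithBot ℝ}

lemma bound_le_of_cdot_mulVec_le (hh : Reg h) {x : Fin n → WithBot ℝ} (hx : Reg x) (hgx : g ≤ x)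
    (hxh : x ≤ h) {c : ℝ} (hc : cdot x (mulVec A x) ≤ c) :
    specRad A ⊔ (Finset.Icc 1 n).sup (fun k => trt (cdot h (mulVec (tpow A k) g)) k) ≤ c := by
  have hAx := (cdot_mulVec_le_coe_iff A hx c).1 hc
  refine sup_le ((specRad_le_coe_iff A c).2 (Finset.sup_le fun k _ =>
    ttr_nonpos_of_mulVec_le hx (tpow_mulVec_le hAx k))) ?_
  refine (sup_trt_cdot_le_coe_iff A g h c).2 fun k _ => (cdot_le_zero_iff hh).2 ?_
  exact (mulVec_mono _ hgx).trans ((tpow_mulVec_le hAx k).trans hxh)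

end Normalization

end MaxPlus

/-- minimization of `x⁻ A x` subject to `g ≤ x ≤ h`. -/
theorem stmt_14 {n : ℕ} (A : Matrix (Fin n) (Fin n) (WithBot ℝ))
    (hlam : ⊥ < specRad A)
    (g : Fin n → WithBot ℝ) (h : Fin n → WithBot ℝ) (hh : Reg h)
    (hhg : cdot h g ≤ 0)
    (θ : WithBot ℝ)
    (hθ : θ = specRad A
        ⊔ (Finset.Icc 1 n).sup fun k => trt (cdot h (mulVec (tpow A k) g)) k) :
    IsLeast {v | ∃ x : Fin n → WithBot ℝ, Reg x ∧ (∀ i, g i ≤ x i ∧ x i ≤ h i) ∧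
        cdot x (mulVec A x) = v} θ ∧
      ∀ x : Fin n → WithBot ℝ, Reg x → (∀ i, g i ≤ x i ∧ x i ≤ h i) →
        (cdot x (mulVec A x) = θ ↔
          ∃ u : Fin n → WithBot ℝ,
            x = mulVec (kstar fun a b => tinv θ + A a b) u ∧
            ∀ j, g j ≤ u j ∧
              u j ≤ tinv (Finset.univ.sup fun r =>
                tinv (h r) + kstar (fun a b => tinv θ + A a b) r j)) := by
  lift θ to ℝ using (hlam.trans_le (hθ ▸ le_sup_left)).ne' with t
  obtain ⟨hρt, hgt⟩ := sup_le_iff.1 hθ.symm.le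
  set M := tsmul (tinv t) A
  have hM : TrOp M ≤ 0 := (specRad_le_coe_iff A t).1 hρt
  have hgM : mulVec (kstar M) g ≤ h := by
    refine kstar_mulVec_le_iff.2 fun k hk => (cdot_le_zero_iff hh).1 ?_
    rcases k with _ | k
    · rwa [tpow, mulVec_tId]
    · exact (sup_trt_cdot_le_coe_iff A g h t).1 hgt _ (by simp; omega)
  have lower (x) (hx : Reg x) (hgx : g ≤ x) (hxh : x ≤ h) :
      (t : WithBot ℝ) ≤ cdot x (mulVec A x) := by
    -- `x⁻ A x` may be `⊥`, so compare it with every real bound above it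
    refine le_of_forall_gt_imp_ge_of_dense fun c hc => ?_
    lift c to ℝ using hc.ne_bot
    exact hθ ▸ bound_le_of_cdot_mulVec_le hh hx hgx hxh hc.le
  have optimal (x) (hx : Reg x) (hgx : g ≤ x) (hxh : x ≤ h) :
      cdot x (mulVec A x) = t ↔ mulVec M x ≤ x := by
    rw [← cdot_mulVec_le_coe_iff A hx, le_antisymm_iff, and_iff_left (lower x hx hgx hxh)]
  obtain ⟨x₀, hx₀, hgx₀, hx₀h, hMx₀⟩ := exists_reg_mulVec_le_self hM hh hgM
  refine ⟨⟨⟨x₀, hx₀, fun i => ⟨hgx₀ i, hx₀h i⟩, (optimal x₀ hx₀ hgx₀ hx₀h).2 hMx₀⟩, ?_⟩,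
    fun x hx hgh => ?_⟩
  · rintro _ ⟨x, hx, hgh, rfl⟩
    exact lower x hx (fun i => (hgh i).1) fun i => (hgh i).2
  · rw [optimal x hx (fun i => (hgh i).1) fun i => (hgh i).2,
      mulVec_le_self_iff_eq_kstar_mulVec hM hh (fun i => (hgh i).1) fun i => (hgh i).2]
    simp only [Pi.le_def, ← forall_and]
    rfl
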